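/- Let Σ = {a,b}, let (n_j)_{j≥1} with n_j ≥ 2, define α₀ = a, β₀ = b, α_{j+1} = (α_j²β_j)^{n_{j+1}}, β_{j+1} = (β_j²α_j)^{n_{j+1}}, and N_k = |α_k|. Let u be any factor of the doubly infinite concatenation of the α_k, β_k blocks (i.e., u factors the bi-infinite word w = lim α_j) with |u| ≤ N_k - 3N_{k-1}. Then u is a factor of α_k β_k or of β_k α_k. -/

import Mathlib

mutual
/-- The word `α_j` over `{a, b}` (with `a := true`, `b := false`):
`α₀ = a`, `α_{j+1} = (α_j α_j β_j)^{n_{j+1}}`. -/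
def wordA (n : ℕ → ℕ) : ℕ → List Bool
  | 0 => [true]
  | j + 1 => (List.replicate (n (j + 1)) (wordA n j ++ wordA n j ++ wordB n j)).flatten

/-- The word `β_j`: `β₀ = b`, `β_{j+1} = (β_j β_j α_j)^{n_{j+1}}`. -/
def wordB (n : ℕ → ℕ) : ℕ → List Bool
  | 0 => [false]
  | j + 1 => (List.replicate (n (j + 1)) (wordB n j ++ wordB n j ++ wordA n j)).flatten
end

/-- `N_k = ∏_{j=1}^k (3 n_j)`, the common length of `α_k` and `β_k`. -/
def Nlen (n : ℕ → ℕ) (k : ℕ) : ℕ := ∏ j ∈ Finset.Icc 1 k, 3 * n j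

/-! A factor `u` of `α_m` is a factor of `α_M` for every `M ≥ m`, and for `M ≥ k` the word `α_M`
is a concatenation of blocks `α_k`, `β_k` of common length `N_k`. Since `|u| ≤ N_k`, the
occurrence of `u` meets at most two consecutive blocks, so `u` is a factor of `α_kα_k`, `α_kβ_k`,
`β_kα_k` or `β_kβ_k`. The two squares reduce to `α_k` and `β_k` by periodicity:
`α_kα_k = p^{2n_k}` with `p = α_{k-1}α_{k-1}β_{k-1}` of length `3N_{k-1}`, an occurrence in a
power of `p` can be moved by a multiple of `|p|` to start inside the first copy of `p`, and then
`|u| ≤ N_k - 3N_{k-1} = |p^{n_k}| - |p|` places it inside `p^{n_k} = α_k`. -/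

namespace List

variable {α : Type*}

theorem flatten_replicate_prefix_of_le (p : List α) {b c : ℕ} (h : b ≤ c) :
    (replicate b p).flatten <+: (replicate c p).flatten := by
  obtain ⟨d, rfl⟩ := Nat.exists_eq_add_of_le h
  rw [replicate_add, flatten_append]
  exact prefix_append _ _

theorem infix_flatten_replicate_of_length_le {p u : List α} {b c : ℕ}
    (hu : u <:+: (replicate c p).flatten) (hlen : u.length + p.length ≤ b * p.length) :
    u <:+: (replicate b p).flatten := by
  induction c with
  | zero =>
    obtain rfl : u = [] := by simpa using hu
    exact nil_infix
  | succ c ih =>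
    rcases le_or_gt (c + 1) b with hcb | hbc
    · exact hu.trans (flatten_replicate_prefix_of_le p hcb).isInfix
    obtain ⟨s, r, hsur⟩ := hu
    rw [replicate_succ, flatten_cons] at hsur
    rcases le_or_gt p.length s.length with hs | hs
    · obtain ⟨s', rfl⟩ : p <+: s :=
        prefix_of_prefix_length_le (prefix_append _ _) ⟨u ++ r, by rw [← hsur, append_assoc]⟩ hs
      exact ih ⟨s', r, by simpa using hsur⟩
    · have hsu : s ++ u <+: (replicate b p).flatten := by
        refine prefix_of_prefix_length_le ⟨r, ?_⟩ (flatten_replicate_prefix_of_le p hbc.le) ?_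
        · rw [replicate_succ, flatten_cons, hsur]
        · simp only [length_append, length_flatten, map_replicate, sum_replicate, smul_eq_mul]
          omega
      exact (suffix_append s u).isInfix.trans hsu.isInfix

theorem infix_of_infix_append_self {p w u : List α} {b : ℕ} (hw : w = (replicate b p).flatten)
    (hu : u <:+: w ++ w) (hlen : u.length + p.length ≤ w.length) : u <:+: w := by
  subst hw
  rw [← flatten_append, ← replicate_add] at hu
  exact infix_flatten_replicate_of_length_le hu (by simpa using hlen)

theorem exists_infix_append_of_infix_flatten {L : List (List α)} {u : List α} {ℓ : ℕ}
    (hL : ∀ x ∈ L, x.length = ℓ) (hu : u <:+: L.flatten) (hu₀ : u ≠ []) (hlen : u.length ≤ ℓ) :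
    ∃ x ∈ L, ∃ y ∈ L, u <:+: x ++ y := by
  induction L with
  | nil => exact absurd (by simpa using hu) hu₀
  | cons x L ih =>
    rw [flatten_cons, infix_append_iff] at hu
    rcases hu with hx | hL' | ⟨u₁, u₂, rfl, hu₁, hu₂⟩
    · exact ⟨x, mem_cons_self, x, mem_cons_self, infix_append_of_infix_left hx⟩
    · obtain ⟨y, hy, z, hz, hyz⟩ := ih (fun y hy => hL y (mem_cons_of_mem x hy)) hL'
      exact ⟨y, mem_cons_of_mem x hy, z, mem_cons_of_mem x hz, hyz⟩
    · cases L with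
      | nil =>
        obtain rfl : u₂ = [] := by simpa using hu₂
        refine ⟨x, mem_cons_self, x, mem_cons_self, ?_⟩
        simpa using infix_append_of_infix_left hu₁.isInfix
      | cons y L =>
        have hu₂y : u₂ <+: y := by
          refine prefix_of_prefix_length_le hu₂ (prefix_append y _) ?_
          rw [hL y (by simp)]
          simp only [length_append] at hlen
          omega
        exact ⟨x, mem_cons_self, y, by simp,
          infix_append_iff.2 (Or.inr (Or.inr ⟨u₁, u₂, rfl, hu₁, hu₂y⟩))⟩

end List

theorem Nlen_succ (n : ℕ → ℕ) (j : ℕ) : Nlen n (j + 1) = Nlen n j * (3 * n (j + 1)) := by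
  rw [Nlen, Nlen, Finset.prod_Icc_succ_top (by omega)]

theorem length_wordA_wordB (n : ℕ → ℕ) (j : ℕ) :
    (wordA n j).length = Nlen n j ∧ (wordB n j).length = Nlen n j := by
  induction j with
  | zero => simp [wordA, wordB, Nlen]
  | succ j ih =>
    simp only [wordA, wordB, List.length_flatten, List.map_replicate, List.sum_replicate,
      List.length_append, ih.1, ih.2, smul_eq_mul, Nlen_succ]
    constructor <;> ring

theorem wordA_prefix_wordA_of_le {n : ℕ → ℕ} (hn : ∀ j, n (j + 1) ≠ 0) {m M : ℕ} (h : m ≤ M) :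
    wordA n m <+: wordA n M := by
  induction M, h using Nat.le_induction with
  | base => exact List.prefix_refl _
  | succ M _ ih =>
    refine ih.trans ?_
    obtain ⟨c, hc⟩ := Nat.exists_eq_succ_of_ne_zero (hn M)
    rw [wordA, hc, List.replicate_succ, List.flatten_cons, List.append_assoc, List.append_assoc]
    exact List.prefix_append _ _

theorem exists_flatten_eq_wordA_wordB (n : ℕ → ℕ) {k m : ℕ} (h : k ≤ m) :
    (∃ L : List (List Bool), (∀ x ∈ L, x = wordA n k ∨ x = wordB n k) ∧ L.flatten = wordA n m) ∧
    (∃ L : List (List Bool), (∀ x ∈ L, x = wordA n k ∨ x = wordB n k) ∧ L.flatten = wordB n m) := by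
  induction m, h using Nat.le_induction with
  | base => exact ⟨⟨[wordA n k], by simp, by simp⟩, ⟨[wordB n k], by simp, by simp⟩⟩
  | succ m _ ih =>
    obtain ⟨⟨LA, hLA, hLA_flatten⟩, ⟨LB, hLB, hLB_flatten⟩⟩ := ih
    have blocks {P Q : List (List Bool)} (hP : ∀ x ∈ P, x = wordA n k ∨ x = wordB n k)
        (hQ : ∀ x ∈ Q, x = wordA n k ∨ x = wordB n k) :
        ∀ x ∈ (List.replicate (n (m + 1)) (P ++ P ++ Q)).flatten,
          x = wordA n k ∨ x = wordB n k := by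
      intro x hx
      obtain ⟨_, hPQ, hx⟩ := List.mem_flatten.1 hx
      rw [(List.mem_replicate.1 hPQ).2, List.mem_append, List.mem_append, or_self] at hx
      exact hx.elim (hP x) (hQ x)
    refine ⟨⟨_, blocks hLA hLB, ?_⟩, ⟨_, blocks hLB hLA, ?_⟩⟩ <;>
      simp only [List.flatten_flatten, List.map_replicate, List.flatten_append, wordA, wordB,
        hLA_flatten, hLB_flatten]

theorem infix_wordA_of_infix_wordA_append_self {n : ℕ → ℕ} {k : ℕ} {u : List Bool}
    (hu : u <:+: wordA n (k + 1) ++ wordA n (k + 1))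
    (hlen : u.length + 3 * Nlen n k ≤ Nlen n (k + 1)) : u <:+: wordA n (k + 1) := by
  refine List.infix_of_infix_append_self (by rw [wordA]) hu ?_
  simp only [List.length_append, (length_wordA_wordB n k).1, (length_wordA_wordB n k).2,
    (length_wordA_wordB n (k + 1)).1]
  omega

theorem infix_wordB_of_infix_wordB_append_self {n : ℕ → ℕ} {k : ℕ} {u : List Bool}
    (hu : u <:+: wordB n (k + 1) ++ wordB n (k + 1))
    (hlen : u.length + 3 * Nlen n k ≤ Nlen n (k + 1)) : u <:+: wordB n (k + 1) := by
  refine List.infix_of_infix_append_self (by rw [wordB]) hu ?_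
  simp only [List.length_append, (length_wordA_wordB n k).1, (length_wordA_wordB n k).2,
    (length_wordA_wordB n (k + 1)).2]
  omega

/-- Any factor `u` of the limit word `w` (equivalently, any factor of some
`α_m`) with `|u| ≤ Ñ_k = N_k - 3N_{k-1}` (for `k ≥ 1`) is a factor of `α_k β_k` or of
`β_k α_k`. -/
theorem stmt17 (n : ℕ → ℕ) (hn : ∀ j, 1 ≤ j → 2 ≤ n j) (k : ℕ) (hk : 1 ≤ k)
    (u : List Bool) (m : ℕ) (hu : u <:+: wordA n m)
    (hlen : u.length ≤ Nlen n k - 3 * Nlen n (k - 1)) :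
    u <:+: (wordA n k ++ wordB n k) ∨ u <:+: (wordB n k ++ wordA n k) := by
  obtain ⟨k, rfl⟩ : ∃ j, k = j + 1 := ⟨k - 1, by omega⟩
  rcases eq_or_ne u [] with rfl | hu₀
  · exact Or.inl List.nil_infix
  have hlen' : u.length + 3 * Nlen n k ≤ Nlen n (k + 1) := by
    have : 3 * Nlen n k ≤ Nlen n (k + 1) := by
      rw [Nlen_succ]; nlinarith [hn (k + 1) (by omega)]
    rw [Nat.add_sub_cancel] at hlen
    omega
  obtain ⟨L, hL, hL_flatten⟩ := (exists_flatten_eq_wordA_wordB n (le_max_right m (k + 1))).1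
  have huL : u <:+: L.flatten := hL_flatten ▸ hu.trans
    (wordA_prefix_wordA_of_le (fun j => by have := hn (j + 1) (by omega); omega)
      (le_max_left m (k + 1))).isInfix
  have hL_length : ∀ x ∈ L, x.length = Nlen n (k + 1) := fun x hx => by
    rcases hL x hx with rfl | rfl
    exacts [(length_wordA_wordB n _).1, (length_wordA_wordB n _).2]
  obtain ⟨x, hx, y, hy, hxy⟩ :=
    List.exists_infix_append_of_infix_flatten hL_length huL hu₀ (by omega)
  rcases hL x hx with rfl | rfl <;> rcases hL y hy with rfl | rfl
  · exact Or.inl ((infix_wordA_of_infix_wordA_append_self hxy hlen').trans List.infix_append_left)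
  · exact Or.inl hxy
  · exact Or.inr hxy
  · exact Or.inr ((infix_wordB_of_infix_wordB_append_self hxy hlen').trans List.infix_append_left)
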